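/- Let γ₁ : ℝ × ℝ → ℝ be smooth with ∂_x γ₁ > 0 and γ₁(t, x+1) = γ₁(t,x) + 1 for all (t,x); write γ₁⁻¹(t,·) for the inverse of x ↦ γ₁(t,x). Let η₁, γ₂, η₂ : ℝ × ℝ → ℝ be smooth and 1-periodic in x. Then for each (t,x) there is ε₀ > 0 such that y ↦ γ₁(t,y) + ε·η₁(t,y) is invertible for |ε| < ε₀, and the derivative at ε = 0 of ε ↦ (∂_t γ₂ + ε ∂_t η₂)(t, (γ₁(t,·) + ε η₁(t,·))⁻¹(x)) equals (∂_t η₂)(t, γ₁⁻¹(t,x)) − (∂_x ∂_t γ₂)(t, γ₁⁻¹(t,x)) · η₁(t, γ₁⁻¹(t,x)) / (∂_x γ₁)(t, γ₁⁻¹(t,x)); moreover this quantity equals ∂_t [ η₂(t, γ₁⁻¹(t,x)) ] + u(t,x)·∂_x [ η₂(t, γ₁⁻¹(t,x)) ] − η₁(t, γ₁⁻¹(t,x)) · ∂_x [ (∂_t γ₂)(t, γ₁⁻¹(t,x)) ], where u(t,x) := (∂_t γ₁)(t, γ₁⁻¹(t,x)). -/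

import Mathlib

open Real

/-- A smooth function of two real variables (curried form). -/
def Smooth2 (f : ℝ → ℝ → ℝ) : Prop := ContDiff ℝ (⊤ : ℕ∞) (Function.uncurry f)

/-- Partial derivative in the first (time) variable. -/
noncomputable def pt (f : ℝ → ℝ → ℝ) (t x : ℝ) : ℝ := deriv (fun s => f s x) t

/-- Partial derivative in the second (space) variable. -/
noncomputable def px (f : ℝ → ℝ → ℝ) (t x : ℝ) : ℝ := deriv (f t) x

open Function Topology Filter

lemma pt_eq_fderiv {f : ℝ → ℝ → ℝ} (hf : Smooth2 f) (p : ℝ × ℝ) :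
    pt f p.1 p.2 = fderiv ℝ (uncurry f) p ((1:ℝ), (0:ℝ)) := by
  have hD := ((hf.differentiable (by simp)) p).hasFDerivAt
  have hc : HasDerivAt (fun u : ℝ => (u, p.2)) ((1 : ℝ), (0 : ℝ)) p.1 :=
    (hasDerivAt_id _).prodMk (hasDerivAt_const _ _)
  have := hD.comp_hasDerivAt p.1 hc
  simpa [pt, uncurry, Function.comp_def] using this.deriv

lemma px_eq_fderiv {f : ℝ → ℝ → ℝ} (hf : Smooth2 f) (p : ℝ × ℝ) :
    px f p.1 p.2 = fderiv ℝ (uncurry f) p ((0:ℝ), (1:ℝ)) := by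
  have hD := ((hf.differentiable (by simp)) p).hasFDerivAt
  have hc : HasDerivAt (fun y : ℝ => (p.1, y)) ((0 : ℝ), (1 : ℝ)) p.2 :=
    (hasDerivAt_const _ _).prodMk (hasDerivAt_id _)
  have := hD.comp_hasDerivAt p.2 hc
  simpa [px, uncurry, Function.comp_def] using this.deriv

lemma hasDerivAt_comp2 {f : ℝ → ℝ → ℝ} (hf : Smooth2 f) {a b : ℝ → ℝ} {a' b' s : ℝ}
    (ha : HasDerivAt a a' s) (hb : HasDerivAt b b' s) :
    HasDerivAt (fun u => f (a u) (b u))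
      (pt f (a s) (b s) * a' + px f (a s) (b s) * b') s := by
  have hD := ((hf.differentiable (by simp)) (a s, b s)).hasFDerivAt
  set D := fderiv ℝ (uncurry f) (a s, b s) with hDdef
  have hcurve : HasDerivAt (fun u => (a u, b u)) (a', b') s := ha.prodMk hb
  have hcomp := hD.comp_hasDerivAt s hcurve
  have h1 : pt f (a s) (b s) = D (1, 0) := pt_eq_fderiv hf (a s, b s)
  have h2 : px f (a s) (b s) = D (0, 1) := px_eq_fderiv hf (a s, b s)
  have hval : D (a', b') = pt f (a s) (b s) * a' + px f (a s) (b s) * b' := by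
    have h3 : (a', b') = a' • ((1:ℝ), (0:ℝ)) + b' • ((0:ℝ), (1:ℝ)) := by
      simp [Prod.ext_iff]
    rw [h3, map_add, map_smul, map_smul, ← h1, ← h2]
    simp [smul_eq_mul]; ring
  rw [← hval]; exact hcomp

lemma smooth2_pt {f : ℝ → ℝ → ℝ} (hf : Smooth2 f) : Smooth2 (pt f) := by
  have hfd : ContDiff ℝ (⊤ : ℕ∞) (fderiv ℝ (uncurry f)) := hf.fderiv_right (by simp)
  have : Function.uncurry (pt f) = fun p => fderiv ℝ (uncurry f) p ((1:ℝ), (0:ℝ)) := by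
    funext p; exact pt_eq_fderiv hf p
  rw [Smooth2, this]
  exact (ContinuousLinearMap.apply ℝ ℝ ((1:ℝ), (0:ℝ))).contDiff.comp hfd

lemma smooth2_px {f : ℝ → ℝ → ℝ} (hf : Smooth2 f) : Smooth2 (px f) := by
  have hfd : ContDiff ℝ (⊤ : ℕ∞) (fderiv ℝ (uncurry f)) := hf.fderiv_right (by simp)
  have : Function.uncurry (px f) = fun p => fderiv ℝ (uncurry f) p ((0:ℝ), (1:ℝ)) := by
    funext p; exact px_eq_fderiv hf p
  rw [Smooth2, this]
  exact (ContinuousLinearMap.apply ℝ ℝ ((0:ℝ), (1:ℝ))).contDiff.comp hfd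
open Real Function Topology Filter

-- positive lower bound for a positive continuous 1-periodic function
lemma periodic_pos_lb {f : ℝ → ℝ} (hc : Continuous f) (hper : Function.Periodic f 1)
    (hpos : ∀ x, 0 < f x) : ∃ m > 0, ∀ x, m ≤ f x := by
  obtain ⟨c, hc01, hmin⟩ := (isCompact_Icc (a := (0:ℝ)) (b := 1)).exists_isMinOn
    (Set.nonempty_Icc.mpr zero_le_one) hc.continuousOn
  refine ⟨f c, hpos c, fun x => ?_⟩
  obtain ⟨y, hy, hxy⟩ := hper.exists_mem_Ico₀ one_pos x
  rw [hxy]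
  exact hmin (Set.mem_Icc.mpr ⟨hy.1, hy.2.le⟩)

lemma periodic_ub {f : ℝ → ℝ} (hc : Continuous f) (hper : Function.Periodic f 1) :
    ∃ M, ∀ x, |f x| ≤ M := by
  obtain ⟨c, hc01, hmax⟩ := (isCompact_Icc (a := (0:ℝ)) (b := 1)).exists_isMaxOn
    (Set.nonempty_Icc.mpr zero_le_one) (hc.abs.continuousOn)
  refine ⟨|f c|, fun x => ?_⟩
  obtain ⟨y, hy, hxy⟩ := hper.exists_mem_Ico₀ one_pos x
  rw [hxy]
  exact hmax (Set.mem_Icc.mpr ⟨hy.1, hy.2.le⟩)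

lemma shift_nat {f : ℝ → ℝ} (hper : ∀ x, f (x + 1) = f x + 1) (x : ℝ) :
    ∀ n : ℕ, f (x + n) = f x + n := by
  intro n; induction n with
  | zero => simp
  | succ k ih => push_cast; rw [← add_assoc, hper, ih]; push_cast; ring

lemma surj_of_per {f : ℝ → ℝ} (hc : Continuous f) (hper : ∀ x, f (x + 1) = f x + 1) :
    Function.Surjective f := by
  intro z
  obtain ⟨n, hn⟩ := exists_nat_ge (|z - f 0|)
  have h1 : f (-(n:ℝ) + n) = f (-(n:ℝ)) + n := shift_nat hper _ n
  have h2 : f ((0:ℝ) + n) = f 0 + n := shift_nat hper 0 n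
  have hfl : f (-(n:ℝ)) = f 0 - n := by
    have : f ((-(n:ℝ)) + n) = f 0 := by norm_num
    linarith [h1.symm.trans this]
  have hbound := abs_le.mp hn
  have hle : (-(n:ℝ)) ≤ n := by have : (0:ℝ) ≤ n := n.cast_nonneg; linarith
  have : z ∈ Set.Icc (f (-(n:ℝ))) (f (n:ℝ)) := by
    constructor
    · rw [hfl]; linarith
    · have : f (n:ℝ) = f 0 + n := by simpa using h2
      rw [this]; linarith
  obtain ⟨y, _, hy⟩ := intermediate_value_Icc hle hc.continuousOn this
  exact ⟨y, hy⟩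

-- triangular continuous linear equiv
noncomputable def tri (H G : ℝ) (hG : G ≠ 0) : (ℝ × ℝ) ≃L[ℝ] (ℝ × ℝ) :=
  LinearEquiv.toContinuousLinearEquiv
  { toFun := fun p => (p.1, H * p.1 + G * p.2)
    invFun := fun p => (p.1, (p.2 - H * p.1) / G)
    map_add' := by intro p q; simp [Prod.ext_iff]; ring
    map_smul' := by intro c p; simp [Prod.ext_iff, smul_eq_mul]; ring
    left_inv := by intro p; simp [Prod.ext_iff]; field_simp
    right_inv := by intro p; simp [Prod.ext_iff]; field_simp; ring }

@[simp] lemma tri_apply (H G : ℝ) (hG : G ≠ 0) (p : ℝ × ℝ) :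
    tri H G hG p = (p.1, H * p.1 + G * p.2) := rfl

@[simp] lemma tri_symm_apply (H G : ℝ) (hG : G ≠ 0) (p : ℝ × ℝ) :
    (tri H G hG).symm p = (p.1, (p.2 - H * p.1) / G) := rfl

lemma implicit_1d {F : ℝ → ℝ → ℝ} (hF : Smooth2 F) (a₀ b₀ : ℝ)
    (hx : px F a₀ b₀ ≠ 0) :
    ∃ k : ℝ × ℝ → ℝ,
      k (a₀, F a₀ b₀) = b₀ ∧
      (∀ᶠ q in 𝓝 (a₀, F a₀ b₀), F q.1 (k q) = q.2) ∧
      HasFDerivAt k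
        ((-(pt F a₀ b₀ / px F a₀ b₀)) • ContinuousLinearMap.fst ℝ ℝ ℝ
          + (1 / px F a₀ b₀) • ContinuousLinearMap.snd ℝ ℝ ℝ) (a₀, F a₀ b₀) := by
  set T := pt F a₀ b₀
  set G := px F a₀ b₀
  set Φ : ℝ × ℝ → ℝ × ℝ := fun p => (p.1, F p.1 p.2) with hΦdef
  set A : (ℝ × ℝ) ≃L[ℝ] (ℝ × ℝ) := tri T G hx with hAdef
  have hΦc : ContDiff ℝ (⊤ : ℕ∞) Φ := contDiff_fst.prodMk hF
  -- HasFDerivAt Φ ↑A (a₀, b₀)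
  have hFD : HasFDerivAt Φ (A : (ℝ × ℝ) →L[ℝ] (ℝ × ℝ)) (a₀, b₀) := by
    have hD := ((hF.differentiable (by simp)) (a₀, b₀)).hasFDerivAt
    have h2 : HasFDerivAt (fun p : ℝ × ℝ => F p.1 p.2)
        (fderiv ℝ (uncurry F) (a₀, b₀)) (a₀, b₀) := hD
    have h1 : HasFDerivAt (fun p : ℝ × ℝ => p.1)
        (ContinuousLinearMap.fst ℝ ℝ ℝ) (a₀, b₀) := hasFDerivAt_fst
    have hcoe : ((ContinuousLinearMap.fst ℝ ℝ ℝ).prod (fderiv ℝ (uncurry F) (a₀, b₀)))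
        = (A : (ℝ × ℝ) →L[ℝ] (ℝ × ℝ)) := by
      apply ContinuousLinearMap.ext
      intro p
      have hp : p = p.1 • ((1:ℝ), (0:ℝ)) + p.2 • ((0:ℝ), (1:ℝ)) := by simp [Prod.ext_iff]
      have hDp : fderiv ℝ (uncurry F) (a₀, b₀) p = T * p.1 + G * p.2 := by
        conv_lhs => rw [hp]
        rw [map_add, map_smul, map_smul, ← pt_eq_fderiv hF (a₀, b₀), ← px_eq_fderiv hF (a₀, b₀)]
        simp [smul_eq_mul, T, G]; ring
      simp [ContinuousLinearMap.prod_apply, hDp, hAdef, Prod.ext_iff]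
    rw [← hcoe]
    exact h1.prodMk h2
  have hstrict : HasStrictFDerivAt Φ (A : (ℝ × ℝ) →L[ℝ] (ℝ × ℝ)) (a₀, b₀) :=
    hΦc.contDiffAt.hasStrictFDerivAt' hFD (by simp)
  set N := hstrict.localInverse Φ A (a₀, b₀) with hNdef
  have hΦpt : Φ (a₀, b₀) = (a₀, F a₀ b₀) := rfl
  refine ⟨fun q => (N q).2, ?_, ?_, ?_⟩
  · have := hstrict.localInverse_apply_image
    rw [hΦpt] at this
    rw [← hNdef] at this
    simpa using congrArg Prod.snd this
  · have hev := hstrict.eventually_right_inverse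
    rw [hΦpt] at hev
    filter_upwards [hev] with q hq
    have hq' : ((N q).1, F (N q).1 (N q).2) = q := hq
    have h1 : (N q).1 = q.1 := (Prod.ext_iff.mp hq').1
    have h2 : F (N q).1 (N q).2 = q.2 := (Prod.ext_iff.mp hq').2
    rwa [h1] at h2
  · have hNs : HasStrictFDerivAt N ((A.symm : (ℝ × ℝ) →L[ℝ] (ℝ × ℝ))) (a₀, F a₀ b₀) := by
      have := hstrict.to_localInverse
      rwa [hΦpt] at this
    have hk : HasFDerivAt (fun q => (N q).2)
        ((ContinuousLinearMap.snd ℝ ℝ ℝ).comp (A.symm : (ℝ × ℝ) →L[ℝ] (ℝ × ℝ)))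
        (a₀, F a₀ b₀) := (hasFDerivAt_snd.comp _ hNs.hasFDerivAt)
    have hcoe : (ContinuousLinearMap.snd ℝ ℝ ℝ).comp (A.symm : (ℝ × ℝ) →L[ℝ] (ℝ × ℝ))
        = (-(T / G)) • ContinuousLinearMap.fst ℝ ℝ ℝ
          + (1 / G) • ContinuousLinearMap.snd ℝ ℝ ℝ := by
      apply ContinuousLinearMap.ext
      intro p
      simp [ContinuousLinearMap.comp_apply, hAdef, ContinuousLinearMap.smul_apply]
      field_simp
      ring
    rwa [hcoe] at hk

/-- The key variational computation in the proof that the 2CH system with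
vorticity is the Euler–Lagrange equation of the right-invariant energy
functional on `(Diff^∞(𝕊) ⋉ C^∞(𝕊)) × ℝ`. -/
theorem stmt7 (γ₁ η₁ γ₂ η₂ ginv : ℝ → ℝ → ℝ)
    (hγ₁ : Smooth2 γ₁) (hη₁ : Smooth2 η₁) (hγ₂ : Smooth2 γ₂) (hη₂ : Smooth2 η₂)
    (hγ₁x : ∀ t x, 0 < px γ₁ t x) (hγ₁per : ∀ t x, γ₁ t (x + 1) = γ₁ t x + 1)
    (hη₁per : ∀ t x, η₁ t (x + 1) = η₁ t x)
    (hγ₂per : ∀ t x, γ₂ t (x + 1) = γ₂ t x)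
    (hη₂per : ∀ t x, η₂ t (x + 1) = η₂ t x)
    (hinv₁ : ∀ t x, ginv t (γ₁ t x) = x) (hinv₂ : ∀ t x, γ₁ t (ginv t x) = x) :
    ∀ t x : ℝ, ∃ ε₀ : ℝ, 0 < ε₀ ∧ ∃ ψ : ℝ → ℝ → ℝ,
      (∀ ε : ℝ, |ε| < ε₀ →
        Function.Bijective (fun y => γ₁ t y + ε * η₁ t y) ∧
        Function.LeftInverse (ψ ε) (fun y => γ₁ t y + ε * η₁ t y) ∧
        Function.RightInverse (ψ ε) (fun y => γ₁ t y + ε * η₁ t y)) ∧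
      HasDerivAt (fun ε => pt γ₂ t (ψ ε x) + ε * pt η₂ t (ψ ε x))
        (pt η₂ t (ginv t x)
          - px (pt γ₂) t (ginv t x) * η₁ t (ginv t x) / px γ₁ t (ginv t x)) 0 ∧
      pt η₂ t (ginv t x)
          - px (pt γ₂) t (ginv t x) * η₁ t (ginv t x) / px γ₁ t (ginv t x)
        = deriv (fun s => η₂ s (ginv s x)) t
          + pt γ₁ t (ginv t x) * deriv (fun y => η₂ t (ginv t y)) x
          - η₁ t (ginv t x) * deriv (fun y => pt γ₂ t (ginv t y)) x := by
  intro t x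
  set y₀ := ginv t x with hy₀def
  have hxy₀ : γ₁ t y₀ = x := hinv₂ t x
  set G := px γ₁ t y₀ with hGdef
  have hGpos : 0 < G := hγ₁x t y₀
  -- pointwise derivatives of γ₁ t, η₁ t
  have hgd : ∀ y, HasDerivAt (γ₁ t) (px γ₁ t y) y := by
    intro y
    simpa using hasDerivAt_comp2 hγ₁ (hasDerivAt_const y t) (hasDerivAt_id y)
  have hhd : ∀ y, HasDerivAt (η₁ t) (px η₁ t y) y := by
    intro y
    simpa using hasDerivAt_comp2 hη₁ (hasDerivAt_const y t) (hasDerivAt_id y)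
  -- periodicity of the space derivatives
  have hshift : ∀ y : ℝ, HasDerivAt (fun z : ℝ => z + 1) 1 y :=
    fun y => (hasDerivAt_id y).add_const 1
  have hgper : ∀ y, px γ₁ t (y + 1) = px γ₁ t y := by
    intro y
    have h1 : HasDerivAt (fun z => γ₁ t (z + 1)) (px γ₁ t (y + 1) * 1) y :=
      (hgd (y + 1)).comp y (hshift y)
    have h2 : HasDerivAt (fun z => γ₁ t (z + 1)) (px γ₁ t y) y := by
      have h3 := (hgd y).add_const 1
      exact h3.congr_of_eventuallyEq (Filter.Eventually.of_forall fun z => hγ₁per t z)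
    have := h1.unique h2
    linarith
  have hhper : ∀ y, px η₁ t (y + 1) = px η₁ t y := by
    intro y
    have h1 : HasDerivAt (fun z => η₁ t (z + 1)) (px η₁ t (y + 1) * 1) y :=
      (hhd (y + 1)).comp y (hshift y)
    have h2 : HasDerivAt (fun z => η₁ t (z + 1)) (px η₁ t y) y :=
      (hhd y).congr_of_eventuallyEq (Filter.Eventually.of_forall fun z => hη₁per t z)
    have := h1.unique h2
    linarith
  -- continuity
  have hgc : Continuous (fun y => px γ₁ t y) :=
    (smooth2_px hγ₁).continuous.comp (continuous_const.prodMk continuous_id)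
  have hhc : Continuous (fun y => px η₁ t y) :=
    (smooth2_px hη₁).continuous.comp (continuous_const.prodMk continuous_id)
  obtain ⟨m, hm, hmle⟩ := periodic_pos_lb hgc hgper fun y => hγ₁x t y
  obtain ⟨M, hM⟩ := periodic_ub hhc hhper
  have hM0 : 0 ≤ M := le_trans (abs_nonneg _) (hM 0)
  refine ⟨m / (M + 1), by positivity, ?_⟩
  set ε₀ := m / (M + 1) with hε₀def
  have hε₀pos : 0 < ε₀ := by positivity
  -- derivative of the perturbed maps
  have hfd : ∀ (ε : ℝ) (y : ℝ), HasDerivAt (fun y => γ₁ t y + ε * η₁ t y)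
      (px γ₁ t y + ε * px η₁ t y) y := fun ε y => (hgd y).add ((hhd y).const_mul ε)
  have hpos : ∀ ε : ℝ, |ε| < ε₀ → ∀ y, 0 < px γ₁ t y + ε * px η₁ t y := by
    intro ε hε y
    have hM1 : (0:ℝ) < M + 1 := by linarith
    have h1 : |ε * px η₁ t y| ≤ |ε| * M := by
      rw [abs_mul]
      exact mul_le_mul_of_nonneg_left (hM y) (abs_nonneg ε)
    have h2 : |ε| * (M + 1) < m := (lt_div_iff₀ hM1).mp hε
    have h3 := neg_abs_le (ε * px η₁ t y)
    have h4 := hmle y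
    nlinarith [abs_nonneg ε]
  have hmono : ∀ ε : ℝ, |ε| < ε₀ → StrictMono (fun y => γ₁ t y + ε * η₁ t y) := by
    intro ε hε
    apply strictMono_of_deriv_pos
    intro y
    rw [(hfd ε y).deriv]
    exact hpos ε hε y
  have hsurj : ∀ ε : ℝ, Function.Surjective (fun y => γ₁ t y + ε * η₁ t y) := by
    intro ε
    apply surj_of_per
    · have c1 : Continuous (γ₁ t) :=
        hγ₁.continuous.comp (continuous_const.prodMk continuous_id)
      have c2 : Continuous (η₁ t) :=
        hη₁.continuous.comp (continuous_const.prodMk continuous_id)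
      exact c1.add (continuous_const.mul c2)
    · intro y
      simp only [hγ₁per t y, hη₁per t y]
      ring
  refine ⟨fun ε => Function.invFun (fun y => γ₁ t y + ε * η₁ t y), ?_, ?_, ?_⟩
  · intro ε hε
    have hb : Function.Bijective (fun y => γ₁ t y + ε * η₁ t y) :=
      ⟨(hmono ε hε).injective, hsurj ε⟩
    exact ⟨hb, Function.leftInverse_invFun hb.1, Function.rightInverse_invFun hb.2⟩
  · -- the HasDerivAt statement
    have hFsm : Smooth2 (fun ε y => γ₁ t y + ε * η₁ t y) := by
      exact (hγ₁.comp (contDiff_const.prodMk contDiff_snd)).add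
        (contDiff_fst.mul (hη₁.comp (contDiff_const.prodMk contDiff_snd)))
    have hptF : pt (fun ε y => γ₁ t y + ε * η₁ t y) 0 y₀ = η₁ t y₀ := by
      have h : HasDerivAt (fun ε : ℝ => γ₁ t y₀ + ε * η₁ t y₀) (η₁ t y₀) 0 := by
        have h0 : HasDerivAt (fun ε : ℝ => γ₁ t y₀ + ε * η₁ t y₀) (0 + 1 * η₁ t y₀) 0 :=
          (hasDerivAt_const (0:ℝ) (γ₁ t y₀)).add
          ((hasDerivAt_id (0:ℝ)).mul_const (η₁ t y₀))
        simpa using h0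
      exact h.deriv
    have hpxF : px (fun ε y => γ₁ t y + ε * η₁ t y) 0 y₀ = G := by
      have h := hfd 0 y₀
      have h2 := h.deriv
      simpa [px, hGdef] using h2
    have hFval : γ₁ t y₀ + 0 * η₁ t y₀ = x := by
      rw [hxy₀]; ring
    obtain ⟨k, hk0, hkev, hkd⟩ := implicit_1d hFsm 0 y₀ (by rw [hpxF]; exact hGpos.ne')
    rw [hFval] at hk0 hkev hkd
    rw [hptF, hpxF] at hkd
    have hcur : HasDerivAt (fun ε : ℝ => ((ε : ℝ), x)) ((1:ℝ), (0:ℝ)) 0 :=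
      (hasDerivAt_id 0).prodMk (hasDerivAt_const 0 x)
    have hkc : HasDerivAt (fun ε => k (ε, x)) (-(η₁ t y₀ / G)) 0 := by
      have h := hkd.comp_hasDerivAt 0 hcur
      exact h.congr_deriv (by simp [hGdef])
    -- eventual equality with ψ
    have htend : Filter.Tendsto (fun ε : ℝ => ((ε : ℝ), x)) (𝓝 0) (𝓝 ((0:ℝ), x)) :=
      hcur.continuousAt
    have hev1 := htend.eventually hkev
    have hev2 : ∀ᶠ ε : ℝ in 𝓝 0, |ε| < ε₀ := by
      filter_upwards [Metric.ball_mem_nhds (0:ℝ) hε₀pos] with ε hε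
      simpa [Real.dist_eq] using hε
    have hψev : ∀ᶠ ε : ℝ in 𝓝 0,
        Function.invFun (fun y => γ₁ t y + ε * η₁ t y) x = k (ε, x) := by
      filter_upwards [hev1, hev2] with ε h1 h2
      have hb2 := Function.rightInverse_invFun (hsurj ε)
      have hfε : (fun y => γ₁ t y + ε * η₁ t y)
          (Function.invFun (fun y => γ₁ t y + ε * η₁ t y) x) = x := hb2 x
      have hfk : (fun y => γ₁ t y + ε * η₁ t y) (k (ε, x)) = x := h1
      exact (hmono ε h2).injective (hfε.trans hfk.symm)
    -- derivative of the k-version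
    have hk0' : (fun ε : ℝ => k (ε, x)) 0 = y₀ := hk0
    have hd1 : HasDerivAt (fun ε => pt γ₂ t (k (ε, x)))
        (pt (pt γ₂) t y₀ * 0 + px (pt γ₂) t y₀ * (-(η₁ t y₀ / G))) 0 := by
      have h := hasDerivAt_comp2 (smooth2_pt hγ₂) (hasDerivAt_const (0:ℝ) t) hkc
      rw [show k ((0:ℝ), x) = y₀ from hk0] at h
      exact h
    have hd2 : HasDerivAt (fun ε => pt η₂ t (k (ε, x)))
        (pt (pt η₂) t y₀ * 0 + px (pt η₂) t y₀ * (-(η₁ t y₀ / G))) 0 := by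
      have h := hasDerivAt_comp2 (smooth2_pt hη₂) (hasDerivAt_const (0:ℝ) t) hkc
      rw [show k ((0:ℝ), x) = y₀ from hk0] at h
      exact h
    have hd3 : HasDerivAt (fun ε => ε * pt η₂ t (k (ε, x)))
        (1 * pt η₂ t y₀ + 0 * (pt (pt η₂) t y₀ * 0 + px (pt η₂) t y₀ * (-(η₁ t y₀ / G)))) 0 := by
      have h := (hasDerivAt_id (0:ℝ)).mul hd2
      rw [show k ((0:ℝ), x) = y₀ from hk0] at h
      exact h
    have hGder := hd1.add hd3
    have hmain : HasDerivAt
        (fun ε => pt γ₂ t (Function.invFun (fun y => γ₁ t y + ε * η₁ t y) x)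
          + ε * pt η₂ t (Function.invFun (fun y => γ₁ t y + ε * η₁ t y) x))
        ((pt (pt γ₂) t y₀ * 0 + px (pt γ₂) t y₀ * (-(η₁ t y₀ / G)))
          + (1 * pt η₂ t y₀ + 0 * (pt (pt η₂) t y₀ * 0 + px (pt η₂) t y₀ * (-(η₁ t y₀ / G))))) 0 := by
      refine hGder.congr_of_eventuallyEq ?_
      filter_upwards [hψev] with ε hε
      rw [hε]; rfl
    convert hmain using 1
    field_simp
    ring
  · -- the final identity
    obtain ⟨l, hl0, hlev, hld⟩ := implicit_1d hγ₁ t y₀ (hγ₁x t y₀).ne'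
    rw [hxy₀] at hl0 hlev hld
    set T := pt γ₁ t y₀ with hTdef
    -- eventual identification of ginv with l
    have hlinv : ∀ q : ℝ × ℝ, γ₁ q.1 (l q) = q.2 → ginv q.1 q.2 = l q := by
      intro q hq
      rw [← hq, hinv₁]
    -- curve in s
    have hcur1 : HasDerivAt (fun s : ℝ => ((s : ℝ), x)) ((1:ℝ), (0:ℝ)) t :=
      (hasDerivAt_id t).prodMk (hasDerivAt_const t x)
    have hl1 : HasDerivAt (fun s => l (s, x)) (-(T / G)) t := by
      have h := hld.comp_hasDerivAt t hcur1
      exact h.congr_deriv (by simp [hGdef])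
    have hev1 : ∀ᶠ s in 𝓝 t, ginv s x = l (s, x) := by
      have htend : Filter.Tendsto (fun s : ℝ => ((s : ℝ), x)) (𝓝 t) (𝓝 ((t:ℝ), x)) :=
        hcur1.continuousAt
      filter_upwards [htend.eventually hlev] with s hs
      exact hlinv (s, x) hs
    -- curve in y
    have hcur2 : HasDerivAt (fun y : ℝ => ((t : ℝ), y)) ((0:ℝ), (1:ℝ)) x :=
      (hasDerivAt_const x t).prodMk (hasDerivAt_id x)
    have hl2 : HasDerivAt (fun y => l (t, y)) (1 / G) x := by
      have h := hld.comp_hasDerivAt x hcur2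
      exact h.congr_deriv (by simp [hGdef])
    have hev2 : ∀ᶠ y in 𝓝 x, ginv t y = l (t, y) := by
      have htend : Filter.Tendsto (fun y : ℝ => ((t : ℝ), y)) (𝓝 x) (𝓝 ((t:ℝ), x)) :=
        hcur2.continuousAt
      filter_upwards [htend.eventually hlev] with y hy
      exact hlinv (t, y) hy
    -- the three derivatives
    have hD1 : deriv (fun s => η₂ s (ginv s x)) t
        = pt η₂ t y₀ * 1 + px η₂ t y₀ * (-(T / G)) := by
      have heq : (fun s => η₂ s (ginv s x)) =ᶠ[𝓝 t] (fun s => η₂ s (l (s, x))) := by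
        filter_upwards [hev1] with s hs; rw [hs]
      rw [heq.deriv_eq]
      have h := hasDerivAt_comp2 hη₂ (hasDerivAt_id t) hl1
      rw [show l ((t:ℝ), x) = y₀ from hl0] at h
      exact h.deriv
    have hD2 : deriv (fun y => η₂ t (ginv t y)) x
        = pt η₂ t y₀ * 0 + px η₂ t y₀ * (1 / G) := by
      have heq : (fun y => η₂ t (ginv t y)) =ᶠ[𝓝 x] (fun y => η₂ t (l (t, y))) := by
        filter_upwards [hev2] with y hy; rw [hy]
      rw [heq.deriv_eq]
      have h := hasDerivAt_comp2 hη₂ (hasDerivAt_const x t) hl2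
      rw [show l ((t:ℝ), x) = y₀ from hl0] at h
      exact h.deriv
    have hD3 : deriv (fun y => pt γ₂ t (ginv t y)) x
        = pt (pt γ₂) t y₀ * 0 + px (pt γ₂) t y₀ * (1 / G) := by
      have heq : (fun y => pt γ₂ t (ginv t y)) =ᶠ[𝓝 x] (fun y => pt γ₂ t (l (t, y))) := by
        filter_upwards [hev2] with y hy; rw [hy]
      rw [heq.deriv_eq]
      have h := hasDerivAt_comp2 (smooth2_pt hγ₂) (hasDerivAt_const x t) hl2
      rw [show l ((t:ℝ), x) = y₀ from hl0] at h
      exact h.deriv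
    rw [hD1, hD2, hD3]
    field_simp
    ring
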